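/- arXiv:1306.5307 — 3 statements merged into one kernel-verified Lean document; each statement's English description precedes it below -/
import Mathlib

section
/- Let (α_n)_{n≥1} be a sequence in [0,1] and (a_n)_{n≥1}, (b_n)_{n≥1} be sequences of nonnegative reals such that a_{n+1} ≤ (1 − α_{n+1})·a_n + b_n for all n ≥ 1. Assume that γ : (0,∞) → ℤ₊ is a Cauchy modulus for the series ∑_{n≥1} b_n (i.e. for all ε > 0 and all m ≥ 1, ∑_{n=γ(ε)+1}^{γ(ε)+m} b_n ≤ ε), that θ : ℤ₊ → ℤ₊ is a rate of divergence for ∑_{n≥1} α_{n+1} (i.e. ∑_{n=1}^{θ(m)} α_{n+1} ≥ m for all m ∈ ℤ₊), and that P > 0 is an upper bound on (a_n). Then a_n → 0 with rate of convergence Σ(ε) = θ(γ(ε/2) + max{⌈ln(2P/ε)⌉, 1}) + 1, i.e. for every ε > 0 and every n ≥ Σ(ε), a_n ≤ ε. -/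
/-!
Put `N = γ(ε/2)` and `K = max{⌈ln(2P/ε)⌉, 1}`. Unrolling the recursion from `N + 1` to `n` gives
`a n ≤ (∏ (1 - α (k+1))) a (N+1) + ∑ b k`, both over `N + 1 ≤ k < n`. The sum is at most `ε/2` by
the Cauchy modulus. Since `1 - x ≤ exp (-x)`, the product is at most `exp (-∑ α (k+1))`, and for
`n > θ(N + K)` this sum is at least `K ≥ ln(2P/ε)`, because the first `N` terms of the divergent
series contribute at most `N`. Hence the first term is at most `e^{-K} P ≤ ε/2`.
-/

open Finset Real

theorem prod_one_sub_le_exp_neg_sum {ι : Type*} (s : Finset ι) {c : ι → ℝ}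
    (hc : ∀ i ∈ s, c i ≤ 1) : ∏ i ∈ s, (1 - c i) ≤ exp (-∑ i ∈ s, c i) := by
  rw [← sum_neg_distrib, exp_sum]
  exact prod_le_prod (fun i hi => sub_nonneg.2 (hc i hi)) fun i _ => one_sub_le_exp_neg (c i)

theorem exp_neg_mul_le_of_log_div_le {P ε x : ℝ} (hP : 0 < P) (hε : 0 < ε)
    (hx : log (P / ε) ≤ x) : exp (-x) * P ≤ ε := by
  calc exp (-x) * P ≤ exp (-log (P / ε)) * P := by gcongr
    _ = ε := by rw [exp_neg, exp_log (by positivity)]; field_simp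

theorem le_prod_one_sub_mul_add_sum {a b c : ℕ → ℝ} {s n : ℕ} (hsn : s ≤ n)
    (hc : ∀ k, s ≤ k → c k ∈ Set.Icc 0 1) (hb : ∀ k, s ≤ k → 0 ≤ b k)
    (hrec : ∀ k, s ≤ k → a (k + 1) ≤ (1 - c k) * a k + b k) :
    a n ≤ (∏ k ∈ Ico s n, (1 - c k)) * a s + ∑ k ∈ Ico s n, b k := by
  induction n, hsn using Nat.le_induction with
  | base => simp
  | succ n hsn ih =>
    obtain ⟨hc0, hc1⟩ := hc n hsn
    have hsum : 0 ≤ ∑ k ∈ Ico s n, b k :=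
      sum_nonneg fun k hk => hb k (mem_Ico.1 hk).1
    rw [prod_Ico_succ_top hsn, sum_Ico_succ_top hsn]
    calc a (n + 1) ≤ (1 - c n) * a n + b n := hrec n hsn
      _ ≤ (1 - c n) * ((∏ k ∈ Ico s n, (1 - c k)) * a s + ∑ k ∈ Ico s n, b k) + b n := by
        gcongr
      _ ≤ _ := by nlinarith

theorem le_of_le_sum_Icc_of_le_one {c : ℕ → ℝ} {m T : ℕ} (hc : ∀ k ∈ Icc 1 T, c k ≤ 1)
    (hm : (m : ℝ) ≤ ∑ k ∈ Icc 1 T, c k) : m ≤ T := by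
  have hsum : ∑ k ∈ Icc 1 T, c k ≤ T := by
    simpa using sum_le_card_nsmul _ _ _ hc
  exact_mod_cast hm.trans hsum

theorem le_sum_Ico_of_add_le_sum_Icc {c : ℕ → ℝ} {N K T n : ℕ}
    (hc : ∀ k, 1 ≤ k → c k ∈ Set.Icc 0 1) (hT : ((N + K : ℕ) : ℝ) ≤ ∑ k ∈ Icc 1 T, c k)
    (hTn : T < n) : (K : ℝ) ≤ ∑ k ∈ Ico (N + 1) n, c k := by
  have hNT : N + K ≤ T :=
    le_of_le_sum_Icc_of_le_one (fun k hk => (hc k (mem_Icc.1 hk).1).2) hT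
  have hhead : ∑ k ∈ Ico 1 (N + 1), c k ≤ N := by
    have h := sum_le_card_nsmul (Ico 1 (N + 1)) c 1 fun k hk => (hc k (mem_Ico.1 hk).1).2
    rwa [Nat.card_Ico, Nat.add_sub_cancel, nsmul_one] at h
  have hmono : ∑ k ∈ Icc 1 T, c k ≤ ∑ k ∈ Ico 1 n, c k :=
    sum_le_sum_of_subset_of_nonneg (fun k hk => by simp at hk ⊢; omega)
      fun k hk _ => (hc k (mem_Ico.1 hk).1).1
  rw [← sum_Ico_consecutive c (by omega : 1 ≤ N + 1) (by omega : N + 1 ≤ n)] at hmono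
  push_cast at hT
  linarith

/-- Quantitative lemma: if `a (n+1) ≤ (1 - α (n+1)) * a n + b n`, `γ` is a Cauchy modulus
for `∑_{n≥1} b n`, `θ` is a rate of divergence for `∑_{n≥1} α (n+1)` and `P > 0` bounds
`(a n)`, then `a n → 0` with rate `Σ(ε) = θ(γ(ε/2) + max{⌈ln(2P/ε)⌉, 1}) + 1`. -/
theorem stmt_0 (a b α : ℕ → ℝ) (γ : ℝ → ℕ) (θ : ℕ → ℕ) (P : ℝ)
    (hα : ∀ n, 1 ≤ n → α n ∈ Set.Icc (0 : ℝ) 1)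
    (ha : ∀ n, 1 ≤ n → 0 ≤ a n) (hb : ∀ n, 1 ≤ n → 0 ≤ b n)
    (hrec : ∀ n, 1 ≤ n → a (n + 1) ≤ (1 - α (n + 1)) * a n + b n)
    (hγ : ∀ ε : ℝ, 0 < ε → ∀ m, 1 ≤ m →
      ∑ n ∈ Finset.Icc (γ ε + 1) (γ ε + m), b n ≤ ε)
    (hθ : ∀ m : ℕ, 1 ≤ m → (m : ℝ) ≤ ∑ n ∈ Finset.Icc 1 (θ m), α (n + 1))
    (hP : 0 < P) (haP : ∀ n, 1 ≤ n → a n ≤ P) :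
    ∀ ε : ℝ, 0 < ε → ∀ n : ℕ,
      θ (γ (ε / 2) + max ⌈Real.log (2 * P / ε)⌉₊ 1) + 1 ≤ n → a n ≤ ε := by
  intro ε hε n hn
  set N := γ (ε / 2)
  set K := max ⌈log (2 * P / ε)⌉₊ 1
  have hαs : ∀ k, 1 ≤ k → α (k + 1) ∈ Set.Icc 0 1 := fun k hk => hα (k + 1) (by omega)
  have hθNK := hθ (N + K) (by omega)
  have hNK : N + K ≤ θ (N + K) :=
    le_of_le_sum_Icc_of_le_one (fun k hk => (hαs k (mem_Icc.1 hk).1).2) hθNK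
  have hdiv : (K : ℝ) ≤ ∑ k ∈ Ico (N + 1) n, α (k + 1) :=
    le_sum_Ico_of_add_le_sum_Icc hαs hθNK (by omega)
  have hprod : ∏ k ∈ Ico (N + 1) n, (1 - α (k + 1)) ≤ exp (-K) :=
    (prod_one_sub_le_exp_neg_sum _ fun k hk => (hαs k (by simp at hk; omega)).2).trans
      (exp_le_exp.2 (neg_le_neg hdiv))
  have hexp : exp (-K) * (2 * P) ≤ ε :=
    exp_neg_mul_le_of_log_div_le (by positivity) hε
      ((Nat.le_ceil _).trans (by exact_mod_cast le_max_left _ _))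
  have htail : ∑ k ∈ Ico (N + 1) n, b k ≤ ε / 2 := by
    convert hγ (ε / 2) (half_pos hε) (n - 1 - N) (by omega) using 2
    rw [← Ico_add_one_right_eq_Icc, show N + (n - 1 - N) + 1 = n by omega]
  calc a n ≤ (∏ k ∈ Ico (N + 1) n, (1 - α (k + 1))) * a (N + 1) + ∑ k ∈ Ico (N + 1) n, b k :=
        le_prod_one_sub_mul_add_sum (by omega) (fun k hk => hαs k (by omega))
          (fun k hk => hb k (by omega)) (fun k hk => hrec k (by omega))
    _ ≤ exp (-K) * P + ε / 2 :=
        add_le_add (mul_le_mul hprod (haP _ le_add_self) (ha _ le_add_self) (exp_pos _).le) htail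
    _ ≤ ε := by linarith
end

section
/- Let N ≥ 1, X a real normed space, C ⊆ X a convex subset, T_1,…,T_N : C → C nonexpansive mappings extended cyclically by T_n := T_{((n−1) mod N)+1}, (λ_n)_{n≥1} a sequence in [0,1], u ∈ C, and let (x_n) be the cyclic Halpern iteration: x_0 = u, x_{n+1} = λ_{n+1}·u + (1 − λ_{n+1})·T_{n+1}x_n. Let M > 0 with ‖x_n − u‖ ≤ M for all n ≥ 1 and ‖u − T_i u‖ ≤ M for each i = 1,…,N. Assume θ : ℤ₊ → ℤ₊ is a rate of divergence for ∑_{n≥1} λ_n, γ : (0,∞) → ℤ₊ is a Cauchy modulus for ∑_{n≥1} |λ_{n+N} − λ_n|, and α : (0,∞) → ℤ₊ satisfies λ_{n+1} ≤ ε for all ε > 0 and all n ≥ α(ε). Then ‖x_n − T_{n+N}T_{n+N−1}⋯T_{n+1}x_n‖ → 0 with rate of convergence Φ(ε) = max{Φ̃(ε/2), α(ε/(4MN))}, where Φ̃(ε) = θ(γ(ε/(4M)) + max{⌈ln(4M/ε)⌉, 1}); i.e. ‖x_n − T_{n+N}⋯T_{n+1}x_n‖ ≤ ε for all ε > 0 and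 all n ≥ Φ(ε). -/
/-!
The estimate splits through `x (n + N)`. First, `a n = ‖x (n + N) - x n‖` satisfies the
Halpern-type recursion `a (n + 1) ≤ (1 - λ (n + 1)) * a n + 2M |λ (n + 1 + N) - λ (n + 1)|`,
because `T (n + 1 + N) = T (n + 1)`; unrolling it from `γ` on, the product `∏ (1 - λ k)` is
at most `exp (-∑ λ k)`, which the rate of divergence `θ` makes small, and the remaining sum is
controlled by the Cauchy modulus `γ`. Second, every Halpern step moves `x m` by at most
`2M λ (m + 1)` away from `T (m + 1) (x m)`, so past `α` the `N` steps from `x n` to `x (n + N)`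
stay within `N · 2M · ε / (4MN) = ε / 2` of the composition `T_{n+N} ⋯ T_{n+1} (x n)`.
-/

/-- `iterComp T n N z` is the composition `T (n+N) (T (n+N-1) (⋯ (T (n+1) z)))`. -/
def iterComp {Y : Type*} (T : ℕ → Y → Y) (n : ℕ) : ℕ → Y → Y
  | 0, z => z
  | (k + 1), z => T (n + k + 1) (iterComp T n k z)

open Finset

def IsRateOfDivergence (c : ℕ → ℝ) (θ : ℕ → ℕ) : Prop :=
  ∀ m : ℕ, 1 ≤ m → (m : ℝ) ≤ ∑ n ∈ Icc 1 (θ m), c n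

def IsCauchyModulus (c : ℕ → ℝ) (γ : ℝ → ℕ) : Prop :=
  ∀ ε : ℝ, 0 < ε → ∀ m, 1 ≤ m → ∑ n ∈ Icc (γ ε + 1) (γ ε + m), c n ≤ ε

section RealSequences

variable {t : ℕ → ℝ}

lemma sum_Ioc_zero_le_of_le_one (ht : ∀ k, 1 ≤ k → t k ≤ 1) (n : ℕ) :
    ∑ k ∈ Ioc 0 n, t k ≤ n := by
  calc ∑ k ∈ Ioc 0 n, t k ≤ ∑ _k ∈ Ioc 0 n, (1 : ℝ) :=
        sum_le_sum fun k hk => ht k (by grind)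
    _ = n := by simp

lemma IsRateOfDivergence.le_sum_Ioc {θ : ℕ → ℕ} (hθ : IsRateOfDivergence t θ)
    (ht : ∀ k, 1 ≤ k → t k ∈ Set.Icc (0 : ℝ) 1) {n₀ K n : ℕ} (hK : 1 ≤ n₀ + K)
    (hn : θ (n₀ + K) ≤ n) : (K : ℝ) ≤ ∑ k ∈ Ioc n₀ n, t k := by
  have hle := sum_Ioc_zero_le_of_le_one (fun k hk => (ht k hk).2)
  have hdiv : ((n₀ + K : ℕ) : ℝ) ≤ ∑ k ∈ Ioc 0 n, t k := by
    calc ((n₀ + K : ℕ) : ℝ) ≤ ∑ k ∈ Ioc 0 (θ (n₀ + K)), t k := hθ _ hK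
      _ ≤ ∑ k ∈ Ioc 0 n, t k :=
        sum_le_sum_of_subset_of_nonneg (Ioc_subset_Ioc_right hn)
          fun k hk _ => (ht k (by grind)).1
  have hn₀ : n₀ ≤ n := by
    have := hdiv.trans (hle n)
    push_cast at this
    exact_mod_cast (by linarith : (n₀ : ℝ) ≤ n)
  rw [← sum_Ioc_consecutive _ (Nat.zero_le n₀) hn₀] at hdiv
  push_cast at hdiv
  linarith [hle n₀]

lemma IsCauchyModulus.sum_Ioc_le {c : ℕ → ℝ} {γ : ℝ → ℕ} (hγ : IsCauchyModulus c γ)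
    {ε : ℝ} (hε : 0 < ε) (n : ℕ) : ∑ k ∈ Ioc (γ ε) n, c k ≤ ε := by
  rcases le_or_gt n (γ ε) with h | h
  · simp [Ioc_eq_empty_of_le h, hε.le]
  · have hIcc : Ioc (γ ε) n = Icc (γ ε + 1) (γ ε + (n - γ ε)) := by
      ext k; simp only [mem_Ioc, mem_Icc]; omega
    rw [hIcc]
    exact hγ ε hε _ (by omega)

lemma prod_one_sub_le_exp_neg_sum_s2 (s : Finset ℕ) (ht : ∀ k ∈ s, t k ≤ 1) :
    ∏ k ∈ s, (1 - t k) ≤ Real.exp (-∑ k ∈ s, t k) := by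
  rw [← sum_neg_distrib, Real.exp_sum]
  exact prod_le_prod (fun k hk => by linarith [ht k hk]) fun k _ => Real.one_sub_le_exp_neg _

lemma le_mul_prod_add_sum_of_le_one_sub_mul_add {a b : ℕ → ℝ} {n₀ : ℕ}
    (ht : ∀ k, n₀ < k → t k ∈ Set.Icc (0 : ℝ) 1) (hb : ∀ k, n₀ < k → 0 ≤ b k)
    (hrec : ∀ k, n₀ ≤ k → a (k + 1) ≤ (1 - t (k + 1)) * a k + b (k + 1))
    {n : ℕ} (hn : n₀ ≤ n) :
    a n ≤ a n₀ * ∏ k ∈ Ioc n₀ n, (1 - t k) + ∑ k ∈ Ioc n₀ n, b k := by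
  induction n, hn using Nat.le_induction with
  | base => simp
  | succ n hn ih =>
    obtain ⟨ht0, ht1⟩ := ht (n + 1) (by omega)
    have hS : 0 ≤ ∑ k ∈ Ioc n₀ n, b k := sum_nonneg fun k hk => hb k (mem_Ioc.1 hk).1
    rw [prod_Ioc_succ_top hn, sum_Ioc_succ_top hn]
    calc a (n + 1) ≤ (1 - t (n + 1)) * a n + b (n + 1) := hrec n hn
      _ ≤ (1 - t (n + 1)) * (a n₀ * ∏ k ∈ Ioc n₀ n, (1 - t k) + ∑ k ∈ Ioc n₀ n, b k)
          + b (n + 1) := by gcongr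
      _ ≤ _ := by nlinarith

/-- Quantitative form of Xu's lemma: a rate of divergence for `∑ t` and a Cauchy modulus
for `∑ c` give an explicit rate of convergence of `a` to `0`. -/
theorem le_of_le_one_sub_mul_add_of_rates {a c : ℕ → ℝ} {L : ℝ} (hL : 0 < L)
    (ht : ∀ k, 1 ≤ k → t k ∈ Set.Icc (0 : ℝ) 1) (hc : ∀ k, 1 ≤ k → 0 ≤ c k)
    (ha : ∀ n, a n ≤ L) (hrec : ∀ n, a (n + 1) ≤ (1 - t (n + 1)) * a n + L * c (n + 1))
    {θ : ℕ → ℕ} (hθ : IsRateOfDivergence t θ)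
    {γ : ℝ → ℕ} (hγ : IsCauchyModulus c γ) {ε : ℝ} (hε : 0 < ε) {n : ℕ}
    (hn : θ (γ (ε / (2 * L)) + max ⌈Real.log (2 * L / ε)⌉₊ 1) ≤ n) : a n ≤ ε := by
  set n₀ := γ (ε / (2 * L))
  set K := max ⌈Real.log (2 * L / ε)⌉₊ 1
  have hK : Real.log (2 * L / ε) ≤ K :=
    (Nat.le_ceil _).trans (by exact_mod_cast le_max_left _ _)
  have hsum : (K : ℝ) ≤ ∑ k ∈ Ioc n₀ n, t k := hθ.le_sum_Ioc ht (by omega) hn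
  have hprod : ∏ k ∈ Ioc n₀ n, (1 - t k) ≤ ε / (2 * L) := by
    calc ∏ k ∈ Ioc n₀ n, (1 - t k) ≤ Real.exp (-∑ k ∈ Ioc n₀ n, t k) :=
          prod_one_sub_le_exp_neg_sum_s2 _ fun k hk => (ht k (by grind)).2
      _ ≤ Real.exp (-Real.log (2 * L / ε)) := Real.exp_le_exp.2 (by linarith)
      _ = ε / (2 * L) := by rw [Real.exp_neg, Real.exp_log (by positivity), inv_div]
  have herr : ∑ k ∈ Ioc n₀ n, L * c k ≤ ε / 2 := by
    rw [← mul_sum]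
    calc L * ∑ k ∈ Ioc n₀ n, c k ≤ L * (ε / (2 * L)) :=
          mul_le_mul_of_nonneg_left (hγ.sum_Ioc_le (by positivity) n) hL.le
      _ = ε / 2 := by field_simp
  have hn₀ : n₀ ≤ n := by
    by_contra! h
    have : ∑ k ∈ Ioc n₀ n, t k = 0 := by simp [Ioc_eq_empty_of_le h.le]
    have : (1 : ℝ) ≤ K := by exact_mod_cast le_max_right _ _
    linarith
  have hP : 0 ≤ ∏ k ∈ Ioc n₀ n, (1 - t k) :=
    prod_nonneg fun k hk => by linarith [(ht k (by grind)).2]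
  calc a n ≤ a n₀ * ∏ k ∈ Ioc n₀ n, (1 - t k) + ∑ k ∈ Ioc n₀ n, L * c k :=
        le_mul_prod_add_sum_of_le_one_sub_mul_add (fun k hk => ht k (by omega))
          (fun k hk => mul_nonneg hL.le (hc k (by omega))) (fun k _ => hrec k) hn₀
    _ ≤ L * (ε / (2 * L)) + ε / 2 := by gcongr; exact ha n₀
    _ = ε := by field_simp; ring

end RealSequences

section Composition

variable {Y : Type*} {T : ℕ → Y → Y} {C : Set Y} {n : ℕ}

lemma iterComp_mapsTo (hT : ∀ m, n < m → Set.MapsTo (T m) C C) :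
    ∀ k, Set.MapsTo (iterComp T n k) C C
  | 0 => Set.mapsTo_id C
  | k + 1 => fun _ hz => hT (n + k + 1) (by omega) (iterComp_mapsTo hT k hz)

lemma dist_iterComp_le [PseudoMetricSpace Y] {y : ℕ → Y} {e : ℝ}
    (hT : ∀ m, n < m → Set.MapsTo (T m) C C) (hTL : ∀ m, n < m → LipschitzOnWith 1 (T m) C)
    (hy : ∀ m, y m ∈ C) (he : ∀ m, n ≤ m → dist (y (m + 1)) (T (m + 1) (y m)) ≤ e) :
    ∀ k, dist (y (n + k)) (iterComp T n k (y n)) ≤ k * e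
  | 0 => by simp [iterComp]
  | k + 1 => by
    have hC : iterComp T n k (y n) ∈ C := iterComp_mapsTo hT k (hy n)
    have hstep : dist (T (n + k + 1) (y (n + k))) (T (n + k + 1) (iterComp T n k (y n)))
        ≤ dist (y (n + k)) (iterComp T n k (y n)) := by
      simpa using (hTL (n + k + 1) (by omega)).dist_le_mul _ (hy _) _ hC
    calc dist (y (n + (k + 1))) (iterComp T n (k + 1) (y n))
        ≤ dist (y (n + k + 1)) (T (n + k + 1) (y (n + k)))
          + dist (T (n + k + 1) (y (n + k))) (T (n + k + 1) (iterComp T n k (y n))) :=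
          dist_triangle _ _ _
      _ ≤ e + k * e :=
          add_le_add (he _ (by omega)) (hstep.trans (dist_iterComp_le hT hTL hy he k))
      _ = (k + 1 : ℕ) * e := by push_cast; ring

end Composition

section Cyclic

variable {Y : Type*} {T : ℕ → Y} {N : ℕ}

lemma apply_of_cyclic (hN : 1 ≤ N) (hcyc : ∀ n, 1 ≤ n → T n = T ((n - 1) % N + 1))
    {P : Y → Prop} (hP : ∀ i, 1 ≤ i → i ≤ N → P (T i)) {n : ℕ} (hn : 1 ≤ n) :
    P (T n) := by
  rw [hcyc n hn]
  exact hP _ (by omega) (Nat.succ_le_of_lt (Nat.mod_lt _ (by omega)))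

lemma apply_add_period_of_cyclic (hcyc : ∀ n, 1 ≤ n → T n = T ((n - 1) % N + 1))
    {n : ℕ} (hn : 1 ≤ n) : T (n + N) = T n := by
  rw [hcyc (n + N) (by omega), hcyc n hn, show n + N - 1 = n - 1 + N by omega,
    Nat.add_mod_right]

end Cyclic

lemma norm_sub_apply_le_of_lipschitzOnWith_one {X : Type*} [SeminormedAddCommGroup X]
    {C : Set X} {S : X → X} (hS : LipschitzOnWith 1 S C) {u y : X} (hu : u ∈ C) (hy : y ∈ C) :
    ‖u - S y‖ ≤ ‖u - S u‖ + ‖y - u‖ := by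
  have hSuy : ‖S u - S y‖ ≤ ‖y - u‖ := by
    simpa [norm_sub_rev u y] using hS.norm_sub_le hu hy
  linarith [norm_sub_le_norm_sub_add_norm_sub u (S u) (S y)]

section Halpern

variable {X : Type*} [NormedAddCommGroup X] [NormedSpace ℝ X]

lemma norm_halpern_step_sub_le {C : Set X} {S : X → X} (hS : LipschitzOnWith 1 S C)
    {y z : X} (hy : y ∈ C) (hz : z ∈ C) (u : X) (a : ℝ) {b : ℝ} (hb : b ≤ 1) :
    ‖(a • u + (1 - a) • S y) - (b • u + (1 - b) • S z)‖
      ≤ (1 - b) * ‖y - z‖ + |a - b| * ‖u - S y‖ := by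
  have hSyz : ‖S y - S z‖ ≤ ‖y - z‖ := by
    simpa using hS.norm_sub_le hy hz
  calc ‖(a • u + (1 - a) • S y) - (b • u + (1 - b) • S z)‖
      = ‖(1 - b) • (S y - S z) + (a - b) • (u - S y)‖ := by congr 1; module
    _ ≤ (1 - b) * ‖S y - S z‖ + |a - b| * ‖u - S y‖ := by
        refine (norm_add_le _ _).trans_eq ?_
        rw [norm_smul, norm_smul, Real.norm_of_nonneg (by linarith), Real.norm_eq_abs]
    _ ≤ (1 - b) * ‖y - z‖ + |a - b| * ‖u - S y‖ := by gcongr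

variable {C : Set X} {T : ℕ → X → X} {lam : ℕ → ℝ} {u : X} {x : ℕ → X}

lemma halpern_mem (hC : Convex ℝ C) (hT : ∀ m, 1 ≤ m → Set.MapsTo (T m) C C)
    (hlam : ∀ n, 1 ≤ n → lam n ∈ Set.Icc (0 : ℝ) 1) (hu : u ∈ C) (hx0 : x 0 = u)
    (hx : ∀ n : ℕ, x (n + 1) = lam (n + 1) • u + (1 - lam (n + 1)) • T (n + 1) (x n)) :
    ∀ n, x n ∈ C
  | 0 => hx0 ▸ hu
  | n + 1 => by
    obtain ⟨h0, h1⟩ := hlam (n + 1) (by omega)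
    rw [hx n]
    exact hC hu (hT (n + 1) (by omega) (halpern_mem hC hT hlam hu hx0 hx n)) h0
      (by linarith) (by ring)

lemma norm_halpern_sub_add_period_le {N : ℕ} {D : ℝ}
    (hT : ∀ m, 1 ≤ m → LipschitzOnWith 1 (T m) C) (hper : ∀ m, 1 ≤ m → T (m + N) = T m)
    (hlam : ∀ n, 1 ≤ n → lam n ≤ 1) (hxC : ∀ n, x n ∈ C)
    (hx : ∀ n : ℕ, x (n + 1) = lam (n + 1) • u + (1 - lam (n + 1)) • T (n + 1) (x n))
    (huT : ∀ m, 1 ≤ m → ∀ j, ‖u - T m (x j)‖ ≤ D) (n : ℕ) :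
    ‖x (n + 1 + N) - x (n + 1)‖
      ≤ (1 - lam (n + 1)) * ‖x (n + N) - x n‖ + D * |lam (n + 1 + N) - lam (n + 1)| := by
  have hxN : x (n + 1 + N)
      = lam (n + 1 + N) • u + (1 - lam (n + 1 + N)) • T (n + 1) (x (n + N)) := by
    rw [show n + 1 + N = n + N + 1 by ring, hx, show n + N + 1 = n + 1 + N by ring,
      hper (n + 1) (by omega)]
  rw [hxN, hx n]
  refine (norm_halpern_step_sub_le (hT (n + 1) (by omega)) (hxC _) (hxC _) u _
    (hlam (n + 1) (by omega))).trans ?_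
  rw [mul_comm D]
  gcongr
  exact huT (n + 1) (by omega) _

lemma norm_halpern_sub_apply_le {D : ℝ} (hlam : ∀ n, 1 ≤ n → 0 ≤ lam n)
    (hx : ∀ n : ℕ, x (n + 1) = lam (n + 1) • u + (1 - lam (n + 1)) • T (n + 1) (x n))
    (huT : ∀ j, ‖u - T (j + 1) (x j)‖ ≤ D) (n : ℕ) :
    ‖x (n + 1) - T (n + 1) (x n)‖ ≤ lam (n + 1) * D := by
  have hl := hlam (n + 1) (by omega)
  calc ‖x (n + 1) - T (n + 1) (x n)‖ = ‖lam (n + 1) • (u - T (n + 1) (x n))‖ := by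
        rw [hx n]; congr 1; module
    _ ≤ lam (n + 1) * D := by
        rw [norm_smul, Real.norm_of_nonneg hl]; exact mul_le_mul_of_nonneg_left (huT n) hl

variable {M : ℝ}

lemma norm_halpern_sub_add_period_le_of_rates {N : ℕ} (hM : 0 < M)
    (hT : ∀ m, 1 ≤ m → LipschitzOnWith 1 (T m) C) (hper : ∀ m, 1 ≤ m → T (m + N) = T m)
    (hlam : ∀ n, 1 ≤ n → lam n ∈ Set.Icc (0 : ℝ) 1) (hxC : ∀ n, x n ∈ C)
    (hx : ∀ n : ℕ, x (n + 1) = lam (n + 1) • u + (1 - lam (n + 1)) • T (n + 1) (x n))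
    (hxu : ∀ n, ‖x n - u‖ ≤ M) (huT : ∀ m, 1 ≤ m → ∀ j, ‖u - T m (x j)‖ ≤ 2 * M)
    {θ : ℕ → ℕ} (hθ : IsRateOfDivergence lam θ)
    {γ : ℝ → ℕ} (hγ : IsCauchyModulus (fun n => |lam (n + N) - lam n|) γ)
    {ε : ℝ} (hε : 0 < ε) {n : ℕ}
    (hn : θ (γ (ε / (4 * M)) + max ⌈Real.log (4 * M / ε)⌉₊ 1) ≤ n) :
    ‖x (n + N) - x n‖ ≤ ε := by
  have ha : ∀ m, ‖x (m + N) - x m‖ ≤ 2 * M := fun m => by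
    linarith [norm_sub_le_norm_sub_add_norm_sub (x (m + N)) u (x m), hxu (m + N),
      norm_sub_rev u (x m), hxu m]
  refine le_of_le_one_sub_mul_add_of_rates (a := fun m => ‖x (m + N) - x m‖)
    (by positivity : 0 < 2 * M) hlam (fun _ _ => abs_nonneg _) ha
    (norm_halpern_sub_add_period_le hT hper (fun k hk => (hlam k hk).2) hxC hx huT) hθ hγ hε ?_
  rwa [show 2 * (2 * M) = 4 * M by ring]

lemma dist_halpern_iterComp_le {n : ℕ} {δ : ℝ} (hM : 0 < M)
    (hTC : ∀ m, 1 ≤ m → Set.MapsTo (T m) C C) (hTL : ∀ m, 1 ≤ m → LipschitzOnWith 1 (T m) C)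
    (hlam : ∀ n, 1 ≤ n → 0 ≤ lam n) (hxC : ∀ n, x n ∈ C)
    (hx : ∀ n : ℕ, x (n + 1) = lam (n + 1) • u + (1 - lam (n + 1)) • T (n + 1) (x n))
    (huT : ∀ m, 1 ≤ m → ∀ j, ‖u - T m (x j)‖ ≤ 2 * M) (hsmall : ∀ m, n ≤ m → lam (m + 1) ≤ δ)
    (k : ℕ) : dist (x (n + k)) (iterComp T n k (x n)) ≤ k * (δ * (2 * M)) := by
  refine dist_iterComp_le (fun m _ => hTC m (by omega)) (fun m _ => hTL m (by omega)) hxC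
    (fun m hm => ?_) k
  rw [dist_eq_norm]
  exact (norm_halpern_sub_apply_le hlam hx (fun j => huT _ (by omega) j) m).trans
    (mul_le_mul_of_nonneg_right (hsmall m hm) (by positivity))

end Halpern

/-- Rate of asymptotic regularity `‖x n - T_{n+N}⋯T_{n+1} (x n)‖ → 0` for the cyclic
Halpern iteration `x 0 = u`, `x (n+1) = λ_{n+1} • u + (1 - λ_{n+1}) • T_{n+1} (x n)`. -/
theorem stmt_2 {X : Type*} [NormedAddCommGroup X] [NormedSpace ℝ X]
    (N : ℕ) (hN : 1 ≤ N) (C : Set X) (hC : Convex ℝ C)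
    (T : ℕ → X → X)
    (hTmap : ∀ i, 1 ≤ i → i ≤ N → Set.MapsTo (T i) C C)
    (hTne : ∀ i, 1 ≤ i → i ≤ N → ∀ x ∈ C, ∀ y ∈ C, ‖T i x - T i y‖ ≤ ‖x - y‖)
    (hcyc : ∀ n, 1 ≤ n → T n = T ((n - 1) % N + 1))
    (lam : ℕ → ℝ) (hlam : ∀ n, 1 ≤ n → lam n ∈ Set.Icc (0 : ℝ) 1)
    (u : X) (hu : u ∈ C) (x : ℕ → X) (hx0 : x 0 = u)
    (hx : ∀ n : ℕ, x (n + 1) = lam (n + 1) • u + (1 - lam (n + 1)) • T (n + 1) (x n))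
    (M : ℝ) (hM : 0 < M)
    (hxb : ∀ n, 1 ≤ n → ‖x n - u‖ ≤ M)
    (hTu : ∀ i, 1 ≤ i → i ≤ N → ‖u - T i u‖ ≤ M)
    (θ : ℕ → ℕ)
    (hθ : ∀ m : ℕ, 1 ≤ m → (m : ℝ) ≤ ∑ n ∈ Finset.Icc 1 (θ m), lam n)
    (γ : ℝ → ℕ)
    (hγ : ∀ ε : ℝ, 0 < ε → ∀ m, 1 ≤ m →
      ∑ n ∈ Finset.Icc (γ ε + 1) (γ ε + m), |lam (n + N) - lam n| ≤ ε)
    (α : ℝ → ℕ)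
    (hα : ∀ ε : ℝ, 0 < ε → ∀ n : ℕ, α ε ≤ n → lam (n + 1) ≤ ε) :
    ∀ ε : ℝ, 0 < ε → ∀ n : ℕ,
      max (θ (γ (ε / 2 / (4 * M)) + max ⌈Real.log (4 * M / (ε / 2))⌉₊ 1))
        (α (ε / (4 * M * N))) ≤ n →
      ‖x n - iterComp T n N (x n)‖ ≤ ε := by
  intro ε hε n hn
  have hTC : ∀ m, 1 ≤ m → Set.MapsTo (T m) C C := fun m =>
    apply_of_cyclic (P := fun S => Set.MapsTo S C C) hN hcyc hTmap
  have hTL : ∀ m, 1 ≤ m → LipschitzOnWith 1 (T m) C := fun m =>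
    apply_of_cyclic (P := fun S => LipschitzOnWith 1 S C) hN hcyc fun i hi hiN =>
      LipschitzOnWith.mk_one fun y hy z hz => by
        simpa [dist_eq_norm] using hTne i hi hiN y hy z hz
  have hxC := halpern_mem hC hTC hlam hu hx0 hx
  have hxu : ∀ j, ‖x j - u‖ ≤ M := fun j =>
    j.eq_zero_or_pos.elim (fun h => by simp [h, hx0, hM.le]) (hxb j)
  have huT : ∀ m, 1 ≤ m → ∀ j, ‖u - T m (x j)‖ ≤ 2 * M := fun m hm j => by
    linarith [norm_sub_apply_le_of_lipschitzOnWith_one (hTL m hm) hu (hxC j), hxu j,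
      apply_of_cyclic (P := fun S => ‖u - S u‖ ≤ M) hN hcyc hTu hm]
  have hfar : ‖x (n + N) - x n‖ ≤ ε / 2 :=
    norm_halpern_sub_add_period_le_of_rates hM hTL (fun m => apply_add_period_of_cyclic hcyc)
      hlam hxC hx hxu huT hθ hγ (by positivity) ((le_max_left _ _).trans hn)
  have hN0 : (0 : ℝ) < N := by exact_mod_cast hN
  have hnear : ‖x (n + N) - iterComp T n N (x n)‖ ≤ ε / 2 := by
    have hδ : 0 < ε / (4 * M * N) := by positivity
    calc _ ≤ N * (ε / (4 * M * N) * (2 * M)) := by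
          rw [← dist_eq_norm]
          exact dist_halpern_iterComp_le hM hTC hTL (fun k hk => (hlam k hk).1) hxC hx huT
            (fun m hm => hα _ hδ m ((le_max_right _ _).trans (hn.trans hm))) N
      _ = ε / 2 := by field_simp; ring
  calc ‖x n - iterComp T n N (x n)‖
      ≤ ‖x n - x (n + N)‖ + ‖x (n + N) - iterComp T n N (x n)‖ :=
        norm_sub_le_norm_sub_add_norm_sub _ _ _
    _ ≤ ε / 2 + ε / 2 := by rw [norm_sub_rev]; exact add_le_add hfar hnear
    _ = ε := by ring
end

section
/- Let N ≥ 1, X a real normed space, C ⊆ X a convex subset, T_1,…,T_N : C → C nonexpansive mappings extended cyclically by T_n := T_{((n−1) mod N)+1}, (λ_n)_{n≥1} a sequence in [0,1], u ∈ C, and let (x_n) be the iteration x_0 = u, x_{n+1} = T_{n+1}(λ_{n+1}·u + (1 − λ_{n+1})·x_n). Let M > 0 with ‖x_n − u‖ ≤ M for all n ∈ ℕ. Then for all n ≥ 1, ‖x_n − x_{n+N}‖ ≤ (1 − λ_n)·‖x_{n−1} − x_{n+N−1}‖ + M·|λ_{n+N} − λ_n|. -/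
/-!
Both `x n` and `x (n + N)` are obtained by applying the same map `T n` (the maps are `N`-periodic)
to the anchored averages `λ • u + (1 - λ) • y` of their predecessors. By nonexpansiveness their
distance is at most that of the two averages, whose difference is
`(1 - λ n) • (x (n-1) - x (n+N-1)) + (λ n - λ (n+N)) • (u - x (n+N-1))`.
-/

open Set

section Cyclic

variable {α : Type*} {N : ℕ} {T : ℕ → α}

theorem cyclic_forall_of_forall_le (hN : 1 ≤ N) (hcyc : ∀ n, 1 ≤ n → T n = T ((n - 1) % N + 1))
    {P : α → Prop} (hP : ∀ i, 1 ≤ i → i ≤ N → P (T i)) (n : ℕ) (hn : 1 ≤ n) : P (T n) := by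
  rw [hcyc n hn]
  exact hP _ (Nat.le_add_left 1 _) (Nat.mod_lt _ (by omega))

theorem cyclic_add_period (hcyc : ∀ n, 1 ≤ n → T n = T ((n - 1) % N + 1)) (n : ℕ) (hn : 1 ≤ n) :
    T (n + N) = T n := by
  rw [hcyc (n + N) (by omega), hcyc n hn, Nat.sub_add_comm hn, Nat.add_mod_right]

end Cyclic

section Halpern

variable {X : Type*} [NormedAddCommGroup X] [NormedSpace ℝ X]

theorem Convex.smul_add_one_sub_smul_mem {C : Set X} (hC : Convex ℝ C) {u y : X} (hu : u ∈ C)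
    (hy : y ∈ C) {a : ℝ} (ha : a ∈ Icc (0 : ℝ) 1) : a • u + (1 - a) • y ∈ C :=
  hC hu hy ha.1 (by linarith [ha.2]) (by ring)

theorem norm_anchored_average_sub_le (u y z : X) {a : ℝ} (ha : a ≤ 1) (b : ℝ) {M : ℝ}
    (hz : ‖z - u‖ ≤ M) :
    ‖(a • u + (1 - a) • y) - (b • u + (1 - b) • z)‖ ≤ (1 - a) * ‖y - z‖ + M * |b - a| := by
  have hsplit : (a • u + (1 - a) • y) - (b • u + (1 - b) • z)
      = (1 - a) • (y - z) + (a - b) • (u - z) := by module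
  calc ‖(a • u + (1 - a) • y) - (b • u + (1 - b) • z)‖
      ≤ ‖(1 - a) • (y - z)‖ + ‖(a - b) • (u - z)‖ := hsplit ▸ norm_add_le _ _
    _ = (1 - a) * ‖y - z‖ + |b - a| * ‖z - u‖ := by
      rw [norm_smul, norm_smul, Real.norm_of_nonneg (by linarith), Real.norm_eq_abs,
        abs_sub_comm, norm_sub_rev u z]
    _ ≤ (1 - a) * ‖y - z‖ + M * |b - a| := by
      rw [mul_comm M]
      gcongr

variable {C : Set X} {T : ℕ → X → X} {lam : ℕ → ℝ} {u : X} {x : ℕ → X}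

theorem halpern_iterate_mem (hC : Convex ℝ C) (hTmap : ∀ n, 1 ≤ n → MapsTo (T n) C C)
    (hlam : ∀ n, 1 ≤ n → lam n ∈ Icc (0 : ℝ) 1) (hu : u ∈ C) (hx0 : x 0 = u)
    (hx : ∀ n : ℕ, x (n + 1) = T (n + 1) (lam (n + 1) • u + (1 - lam (n + 1)) • x n)) (n : ℕ) :
    x n ∈ C := by
  induction n with
  | zero => exact hx0 ▸ hu
  | succ m ih =>
    rw [hx m]
    exact hTmap (m + 1) (by omega)
      (hC.smul_add_one_sub_smul_mem hu ih (hlam (m + 1) (by omega)))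

theorem norm_halpern_iterate_succ_sub_le (hC : Convex ℝ C)
    (hTne : ∀ n, 1 ≤ n → ∀ y ∈ C, ∀ z ∈ C, ‖T n y - T n z‖ ≤ ‖y - z‖)
    (hlam : ∀ n, 1 ≤ n → lam n ∈ Icc (0 : ℝ) 1) (hu : u ∈ C) (hmem : ∀ n, x n ∈ C)
    (hx : ∀ n : ℕ, x (n + 1) = T (n + 1) (lam (n + 1) • u + (1 - lam (n + 1)) • x n))
    {M : ℝ} (hxb : ∀ n : ℕ, ‖x n - u‖ ≤ M) {k l : ℕ} (hT : T (l + 1) = T (k + 1)) :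
    ‖x (k + 1) - x (l + 1)‖ ≤ (1 - lam (k + 1)) * ‖x k - x l‖ + M * |lam (l + 1) - lam (k + 1)| := by
  have hlk := hlam (k + 1) (by omega)
  rw [hx k, hx l, hT]
  exact (hTne (k + 1) (by omega) _ (hC.smul_add_one_sub_smul_mem hu (hmem k) hlk)
    _ (hC.smul_add_one_sub_smul_mem hu (hmem l) (hlam (l + 1) (by omega)))).trans
    (norm_anchored_average_sub_le _ _ _ hlk.2 _ (hxb l))

end Halpern

theorem stmt_12_general {X : Type*} [NormedAddCommGroup X] [NormedSpace ℝ X]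
    (N : ℕ) (hN : 1 ≤ N) (C : Set X) (hC : Convex ℝ C)
    (T : ℕ → X → X)
    (hTmap : ∀ i, 1 ≤ i → i ≤ N → Set.MapsTo (T i) C C)
    (hTne : ∀ i, 1 ≤ i → i ≤ N → ∀ x ∈ C, ∀ y ∈ C, ‖T i x - T i y‖ ≤ ‖x - y‖)
    (hcyc : ∀ n, 1 ≤ n → T n = T ((n - 1) % N + 1))
    (lam : ℕ → ℝ) (hlam : ∀ n, 1 ≤ n → lam n ∈ Set.Icc (0 : ℝ) 1)
    (u : X) (hu : u ∈ C) (x : ℕ → X) (hx0 : x 0 = u)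
    (hx : ∀ n : ℕ, x (n + 1) = T (n + 1) (lam (n + 1) • u + (1 - lam (n + 1)) • x n))
    (M : ℝ)
    (hxb : ∀ n : ℕ, ‖x n - u‖ ≤ M) :
    ∀ n : ℕ, 1 ≤ n →
      ‖x n - x (n + N)‖ ≤
        (1 - lam n) * ‖x (n - 1) - x (n + N - 1)‖ + M * |lam (n + N) - lam n| := by
  have hTmap' := cyclic_forall_of_forall_le hN hcyc (P := fun S => MapsTo S C C) hTmap
  have hTne' := cyclic_forall_of_forall_le hN hcyc
    (P := fun S => ∀ y ∈ C, ∀ z ∈ C, ‖S y - S z‖ ≤ ‖y - z‖) hTne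
  have hmem := halpern_iterate_mem hC hTmap' hlam hu hx0 hx
  intro n hn
  obtain ⟨m, rfl⟩ := Nat.exists_eq_add_of_le' hn
  have hT : T (m + N + 1) = T (m + 1) := by
    rw [Nat.add_right_comm]
    exact cyclic_add_period hcyc (m + 1) (by omega)
  simpa only [Nat.add_sub_cancel, Nat.add_right_comm m 1 N] using
    norm_halpern_iterate_succ_sub_le hC hTne' hlam hu hmem hx hxb hT

/-- For the cyclic iteration `x (n+1) = T (n+1) (λ_{n+1} • u + (1 - λ_{n+1}) • x n)`,
`‖x n - x (n+N)‖ ≤ (1 - λ n)·‖x (n-1) - x (n+N-1)‖ + M·|λ (n+N) - λ n|`. -/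
theorem stmt_12 {X : Type*} [NormedAddCommGroup X] [NormedSpace ℝ X]
    (N : ℕ) (hN : 1 ≤ N) (C : Set X) (hC : Convex ℝ C)
    (T : ℕ → X → X)
    (hTmap : ∀ i, 1 ≤ i → i ≤ N → Set.MapsTo (T i) C C)
    (hTne : ∀ i, 1 ≤ i → i ≤ N → ∀ x ∈ C, ∀ y ∈ C, ‖T i x - T i y‖ ≤ ‖x - y‖)
    (hcyc : ∀ n, 1 ≤ n → T n = T ((n - 1) % N + 1))
    (lam : ℕ → ℝ) (hlam : ∀ n, 1 ≤ n → lam n ∈ Set.Icc (0 : ℝ) 1)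
    (u : X) (hu : u ∈ C) (x : ℕ → X) (hx0 : x 0 = u)
    (hx : ∀ n : ℕ, x (n + 1) = T (n + 1) (lam (n + 1) • u + (1 - lam (n + 1)) • x n))
    (M : ℝ) (hM : 0 < M)
    (hxb : ∀ n : ℕ, ‖x n - u‖ ≤ M) :
    ∀ n : ℕ, 1 ≤ n →
      ‖x n - x (n + N)‖ ≤
        (1 - lam n) * ‖x (n - 1) - x (n + N - 1)‖ + M * |lam (n + N) - lam n| :=
  stmt_12_general N hN C hC T hTmap hTne hcyc lam hlam u hu x hx0 hx M hxb
end
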